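/- arXiv:1702.08807 — 5 statements merged into one kernel-verified Lean document; each statement's English description precedes it below -/
import Mathlib

section
/- Let m ≥ 1, τ > 0, let p be a real number with 1 < p < 2, and let z ∈ ℝ^m with z ≠ 0. Let ᾱ be the unique solution in (0, |z|) of α + τ p α^{p−1} = |z|. Then inf over y ∈ ℝ^m of (|y|^p + |z − y|²/(2τ)) = (|z| − ᾱ) · (2ᾱ + p(|z| − ᾱ)) / (2τp). -/
/-!
The envelope is bounded below by a one-dimensional problem: `‖z - y‖ ≥ |‖z‖ - ‖y‖|` gives
`‖y‖ ^ p + ‖z - y‖ ^ 2 / (2τ) ≥ φ ‖y‖` with `φ t = t ^ p + (‖z‖ - t) ^ 2 / (2τ)`. The equation for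
`α` says that `φ' α = 0`, and the tangent line of the convex function `t ↦ t ^ p` at `α` gives
`φ t ≥ φ α + (t - α) ^ 2 / (2τ)`. The bound `φ α` is attained at `y = (α / ‖z‖) • z`.
-/

open Real

theorem Real.rpow_add_mul_sub_le_rpow {p a t : ℝ} (hp : 1 ≤ p) (ha : 0 < a) (ht : 0 ≤ t) :
    a ^ p + p * a ^ (p - 1) * (t - a) ≤ t ^ p := by
  have hs : -1 ≤ (t - a) / a := by rw [le_div_iff₀ ha]; linarith
  have hbernoulli := one_add_mul_self_le_rpow_one_add hs hp
  rw [show 1 + (t - a) / a = t / a by field_simp; ring, div_rpow ht ha.le,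
    le_div_iff₀ (rpow_pos_of_pos ha p)] at hbernoulli
  calc a ^ p + p * a ^ (p - 1) * (t - a) = (1 + p * ((t - a) / a)) * a ^ p := by
        rw [rpow_sub_one ha.ne']; field_simp
    _ ≤ t ^ p := hbernoulli

theorem Real.rpow_add_sq_div_le_of_stationary {τ p α R t : ℝ} (hτ : 0 < τ) (hp : 1 ≤ p)
    (hα : 0 < α) (hαeq : α + τ * p * α ^ (p - 1) = R) (ht : 0 ≤ t) :
    α ^ p + (R - α) ^ 2 / (2 * τ) ≤ t ^ p + (R - t) ^ 2 / (2 * τ) := by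
  have htangent := rpow_add_mul_sub_le_rpow hp hα ht
  have hslope : p * α ^ (p - 1) = (R - α) / τ := by
    rw [eq_div_iff hτ.ne']; linarith
  rw [hslope] at htangent
  have hsq : 0 ≤ (t - α) ^ 2 / (2 * τ) := by positivity
  have hexpand : (R - t) ^ 2 / (2 * τ)
      = (R - α) ^ 2 / (2 * τ) - (R - α) / τ * (t - α) + (t - α) ^ 2 / (2 * τ) := by
    field_simp; ring
  linarith

theorem Real.rpow_add_sq_div_eq_of_stationary {τ p α R : ℝ} (hτ : 0 < τ) (hp : 0 < p)
    (hα : 0 < α) (hαeq : α + τ * p * α ^ (p - 1) = R) :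
    α ^ p + (R - α) ^ 2 / (2 * τ) = (R - α) * (2 * α + p * (R - α)) / (2 * τ * p) := by
  have hαp : α ^ p = α * α ^ (p - 1) := by
    rw [rpow_sub_one hα.ne']; field_simp
  rw [hαp, ← hαeq]
  have := rpow_pos_of_pos hα (p - 1)
  field_simp
  ring

section NormedSpace

variable {E : Type*} [NormedAddCommGroup E] [NormedSpace ℝ E]

theorem isLeast_range_norm_rpow_add_norm_sub_sq {τ p α : ℝ} (hτ : 0 < τ) (hp : 1 ≤ p)
    {z : E} (hα : 0 < α) (hαz : α < ‖z‖) (hαeq : α + τ * p * α ^ (p - 1) = ‖z‖) :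
    IsLeast (Set.range fun y : E => ‖y‖ ^ p + ‖z - y‖ ^ 2 / (2 * τ))
      (α ^ p + (‖z‖ - α) ^ 2 / (2 * τ)) := by
  have hz : 0 < ‖z‖ := hα.trans hαz
  refine ⟨⟨(α / ‖z‖) • z, ?_⟩, ?_⟩
  · have hzy : z - (α / ‖z‖) • z = ((‖z‖ - α) / ‖z‖) • z := by
      rw [sub_div, div_self hz.ne', sub_smul, one_smul]
    dsimp only
    rw [hzy, norm_smul, norm_smul, norm_div, norm_div, Real.norm_of_nonneg hα.le,
      Real.norm_of_nonneg (sub_pos.2 hαz).le, norm_norm, div_mul_cancel₀ _ hz.ne',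
      div_mul_cancel₀ _ hz.ne']
  · rintro _ ⟨y, rfl⟩
    have hreverse : (‖z‖ - ‖y‖) ^ 2 ≤ ‖z - y‖ ^ 2 :=
      sq_le_sq.2 ((abs_norm_sub_norm_le z y).trans_eq (abs_norm _).symm)
    calc α ^ p + (‖z‖ - α) ^ 2 / (2 * τ) ≤ ‖y‖ ^ p + (‖z‖ - ‖y‖) ^ 2 / (2 * τ) :=
          rpow_add_sq_div_le_of_stationary hτ hp hα hαeq (norm_nonneg y)
      _ ≤ ‖y‖ ^ p + ‖z - y‖ ^ 2 / (2 * τ) := by gcongr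

end NormedSpace

theorem moreau_envelope_rpow_norm_general (m : ℕ) (τ p : ℝ)
    (hτ : 0 < τ) (hp1 : 1 < p)
    (z : EuclideanSpace ℝ (Fin m))
    (α : ℝ) (hα0 : 0 < α) (hαz : α < ‖z‖)
    (hαeq : α + τ * p * α ^ (p - 1) = ‖z‖) :
    sInf (Set.range fun y : EuclideanSpace ℝ (Fin m) => ‖y‖ ^ p + ‖z - y‖ ^ 2 / (2 * τ))
      = (‖z‖ - α) * (2 * α + p * (‖z‖ - α)) / (2 * τ * p) := by
  rw [(isLeast_range_norm_rpow_add_norm_sub_sq hτ hp1.le hα0 hαz hαeq).csInf_eq]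
  exact rpow_add_sq_div_eq_of_stationary hτ (zero_lt_one.trans hp1) hα0 hαeq

/-- For `1 < p < 2`, `τ > 0` and `z ≠ 0`, with `ᾱ` the unique solution in
`(0, |z|)` of `α + τ p α^{p−1} = |z|`, the Moreau envelope of `y ↦ |y|^p` satisfies
`inf_y (|y|^p + |z−y|²/(2τ)) = (|z| − ᾱ)(2ᾱ + p(|z| − ᾱ))/(2τp)`. -/
theorem moreau_envelope_rpow_norm (m : ℕ) (hm : 1 ≤ m) (τ p : ℝ)
    (hτ : 0 < τ) (hp1 : 1 < p) (hp2 : p < 2)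
    (z : EuclideanSpace ℝ (Fin m)) (hz : z ≠ 0)
    (α : ℝ) (hα0 : 0 < α) (hαz : α < ‖z‖)
    (hαeq : α + τ * p * α ^ (p - 1) = ‖z‖) :
    sInf (Set.range fun y : EuclideanSpace ℝ (Fin m) => ‖y‖ ^ p + ‖z - y‖ ^ 2 / (2 * τ))
      = (‖z‖ - α) * (2 * α + p * (‖z‖ - α)) / (2 * τ * p) :=
  moreau_envelope_rpow_norm_general m τ p hτ hp1 z α hα0 hαz hαeq
end

section
/- Let m ≥ 1, τ > 0, let p be a real number with 1 < p < 2, and let z ∈ ℝ^m with z ≠ 0. Let ᾱ be the unique solution in (0, |z|) of α + τ p α^{p−1} = |z|. Then the point y* = ᾱ · z/|z| is the unique minimizer of y ↦ |y|^p + |z − y|²/(2τ) over ℝ^m. -/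
/-!
Write `F y = ‖y‖ ^ p + ‖z - y‖ ^ 2 / (2τ)` and `y* = (α / ‖z‖) • z`. Expanding `‖z - y‖²`,
bounding `‖y‖ ^ p` below by the tangent line of `r ↦ r ^ p` at `α`, and using the defining
equation of `α` to cancel the linear terms gives
`F y ≥ F y* + (α - ‖y‖)² / (2τ) + (‖z‖ ‖y‖ - ⟪z, y⟫) / τ`.
Both correction terms are nonnegative (the second by Cauchy–Schwarz), and they vanish together
only when `‖y‖ = α` and `y` is a nonnegative multiple of `z`, i.e. when `y = y*`.
-/

open RealInnerProductSpace

theorem Real.rpow_add_mul_rpow_sub_one_mul_sub_le {p a r : ℝ} (hp : 1 ≤ p) (ha : 0 < a)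
    (hr : 0 ≤ r) : a ^ p + p * a ^ (p - 1) * (r - a) ≤ r ^ p := by
  have bernoulli := one_add_mul_self_le_rpow_one_add
    (by linarith [div_nonneg hr ha.le] : (-1 : ℝ) ≤ r / a - 1) hp
  rw [add_sub_cancel, Real.div_rpow hr ha.le, le_div_iff₀ (Real.rpow_pos_of_pos ha p)] at bernoulli
  have hpow : a ^ p = a ^ (p - 1) * a := by
    rw [← Real.rpow_add_one ha.ne', sub_add_cancel]
  calc a ^ p + p * a ^ (p - 1) * (r - a) = (1 + p * (r / a - 1)) * a ^ p := by
        rw [hpow]; field_simp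
    _ ≤ r ^ p := bernoulli

section Prox

variable {E : Type*} [NormedAddCommGroup E] [InnerProductSpace ℝ E]

noncomputable def proxObjective (τ p : ℝ) (z y : E) : ℝ :=
  ‖y‖ ^ p + ‖z - y‖ ^ 2 / (2 * τ)

theorem proxObjective_div_norm_smul_self (τ p : ℝ) {z : E} (hz : z ≠ 0) {α : ℝ} (hα : 0 ≤ α) :
    proxObjective τ p z ((α / ‖z‖) • z) = α ^ p + (‖z‖ - α) ^ 2 / (2 * τ) := by
  have hz' : ‖z‖ ≠ 0 := norm_ne_zero_iff.mpr hz
  have hsub : z - (α / ‖z‖) • z = (1 - α / ‖z‖) • z := by rw [sub_smul, one_smul]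
  rw [proxObjective, hsub, norm_smul, norm_smul, Real.norm_eq_abs, Real.norm_eq_abs, mul_pow,
    sq_abs, abs_of_nonneg (by positivity), div_mul_cancel₀ _ hz']
  congr 2
  field_simp

theorem proxObjective_ge {τ p α : ℝ} (hτ : 0 < τ) (hp : 1 ≤ p) (hα : 0 < α) {z : E}
    (hαeq : α + τ * p * α ^ (p - 1) = ‖z‖) (y : E) :
    α ^ p + (‖z‖ - α) ^ 2 / (2 * τ) + (α - ‖y‖) ^ 2 / (2 * τ) + (‖z‖ * ‖y‖ - ⟪z, y⟫) / τ
      ≤ proxObjective τ p z y := by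
  have tangent := Real.rpow_add_mul_rpow_sub_one_mul_sub_le hp hα (norm_nonneg y)
  have expand : proxObjective τ p z y - (α ^ p + (‖z‖ - α) ^ 2 / (2 * τ)
      + (α - ‖y‖) ^ 2 / (2 * τ) + (‖z‖ * ‖y‖ - ⟪z, y⟫) / τ)
      = ‖y‖ ^ p - (α ^ p + p * α ^ (p - 1) * (‖y‖ - α)) := by
    rw [proxObjective, norm_sub_sq_real]
    field_simp
    linear_combination (2 * (‖y‖ - α)) * hαeq
  linarith

theorem eq_div_norm_smul_of_inner_eq_norm_mul {z y : E} (hz : z ≠ 0) {α : ℝ} (hy : ‖y‖ = α)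
    (hinner : ⟪z, y⟫ = ‖z‖ * ‖y‖) : y = (α / ‖z‖) • z := by
  have hcol := inner_eq_norm_mul_iff_real.mp hinner
  rw [hy] at hcol
  rw [div_eq_inv_mul, ← smul_smul, hcol, smul_smul, inv_mul_cancel₀ (norm_ne_zero_iff.mpr hz),
    one_smul]

end Prox

theorem prox_rpow_norm_minimizer_general (m : ℕ) (τ p : ℝ)
    (hτ : 0 < τ) (hp1 : 1 < p)
    (z : EuclideanSpace ℝ (Fin m)) (hz : z ≠ 0)
    (α : ℝ) (hα0 : 0 < α)
    (hαeq : α + τ * p * α ^ (p - 1) = ‖z‖) :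
    (∀ y : EuclideanSpace ℝ (Fin m),
        ‖(α / ‖z‖) • z‖ ^ p + ‖z - (α / ‖z‖) • z‖ ^ 2 / (2 * τ)
          ≤ ‖y‖ ^ p + ‖z - y‖ ^ 2 / (2 * τ)) ∧
    (∀ y : EuclideanSpace ℝ (Fin m),
        (∀ w : EuclideanSpace ℝ (Fin m),
          ‖y‖ ^ p + ‖z - y‖ ^ 2 / (2 * τ) ≤ ‖w‖ ^ p + ‖z - w‖ ^ 2 / (2 * τ)) →
        y = (α / ‖z‖) • z) := by
  have hstar := proxObjective_div_norm_smul_self τ p hz hα0.le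
  have key := proxObjective_ge hτ hp1.le hα0 hαeq
  have radial_nonneg (y : EuclideanSpace ℝ (Fin m)) : 0 ≤ (α - ‖y‖) ^ 2 / (2 * τ) := by
    positivity
  have angular_nonneg (y : EuclideanSpace ℝ (Fin m)) : 0 ≤ (‖z‖ * ‖y‖ - ⟪z, y⟫) / τ :=
    div_nonneg (sub_nonneg.mpr (real_inner_le_norm z y)) hτ.le
  refine ⟨fun y => ?_, fun y hmin => ?_⟩
  · change proxObjective τ p z _ ≤ proxObjective τ p z y
    linarith [key y, radial_nonneg y, angular_nonneg y, hstar]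
  · have hle : proxObjective τ p z y ≤ proxObjective τ p z ((α / ‖z‖) • z) := hmin _
    have radial : (α - ‖y‖) ^ 2 / (2 * τ) = 0 := by
      linarith [key y, radial_nonneg y, angular_nonneg y, hstar]
    have angular : (‖z‖ * ‖y‖ - ⟪z, y⟫) / τ = 0 := by
      linarith [key y, radial_nonneg y, angular_nonneg y, hstar]
    refine eq_div_norm_smul_of_inner_eq_norm_mul hz ?_ ?_
    · have : (α - ‖y‖) ^ 2 = 0 := by simpa [hτ.ne'] using radial
      linarith [pow_eq_zero_iff two_ne_zero |>.mp this]
    · have : ‖z‖ * ‖y‖ - ⟪z, y⟫ = 0 := by simpa [hτ.ne'] using angular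
      linarith

/-- For `τ > 0`, `1 < p < 2`, `z ≠ 0` and `ᾱ` the unique solution in
`(0, |z|)` of `α + τ p α^{p−1} = |z|`, the point `y* = ᾱ · z/|z|` is the unique
minimizer of `y ↦ |y|^p + |z − y|²/(2τ)` over `ℝ^m`. -/
theorem prox_rpow_norm_minimizer (m : ℕ) (hm : 1 ≤ m) (τ p : ℝ)
    (hτ : 0 < τ) (hp1 : 1 < p) (hp2 : p < 2)
    (z : EuclideanSpace ℝ (Fin m)) (hz : z ≠ 0)
    (α : ℝ) (hα0 : 0 < α) (hαz : α < ‖z‖)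
    (hαeq : α + τ * p * α ^ (p - 1) = ‖z‖) :
    (∀ y : EuclideanSpace ℝ (Fin m),
        ‖(α / ‖z‖) • z‖ ^ p + ‖z - (α / ‖z‖) • z‖ ^ 2 / (2 * τ)
          ≤ ‖y‖ ^ p + ‖z - y‖ ^ 2 / (2 * τ)) ∧
    (∀ y : EuclideanSpace ℝ (Fin m),
        (∀ w : EuclideanSpace ℝ (Fin m),
          ‖y‖ ^ p + ‖z - y‖ ^ 2 / (2 * τ) ≤ ‖w‖ ^ p + ‖z - w‖ ^ 2 / (2 * τ)) →
        y = (α / ‖z‖) • z) :=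
  prox_rpow_norm_minimizer_general m τ p hτ hp1 z hz α hα0 hαeq
end

section
/- Let m ≥ 1, τ > 0, let p be a real number with 1 < p < 2, and let z ∈ ℝ^m with z ≠ 0. Let R_p(y) = |y|^{p/(p−1)} · (p^{−1/(p−1)} − p^{−p/(p−1)}) denote the convex conjugate of y ↦ |y|^p, and let ᾱ be the unique solution in (0, |z|) of α + τ^{1−p} p α^{p−1} = |z|. Then the point y* = (|z| − ᾱ) · z/|z| is a minimizer of y ↦ R_p(y) + |z − y|²/(2τ) over ℝ^m. -/
/-!
Write `q = p/(p-1)` and `c = p^(-1/(p-1)) - p^(-p/(p-1))`. Since `‖z - y‖ ≥ |‖z‖ - ‖y‖|`, the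
objective at `y` is at least `φ(‖y‖)` with `φ(r) = c r^q + (‖z‖ - r)²/(2τ)`, while at the
radial point `y*` it equals `φ(‖z‖ - α)`. The function `φ` is convex on `[0, ∞)`, and the
equation defining `α` says precisely that `φ'(‖z‖ - α) = 0`, so the tangent line of `r ↦ r^q`
at `‖z‖ - α` shows that `‖z‖ - α` minimizes `φ`.
-/

theorem Real.tangent_line_le_rpow {q s r : ℝ} (hq : 1 ≤ q) (hs : 0 < s) (hr : 0 ≤ r) :
    s ^ q + q * s ^ (q - 1) * (r - s) ≤ r ^ q := by
  have bernoulli := one_add_mul_self_le_rpow_one_add (s := r / s - 1)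
    (by linarith [div_nonneg hr hs.le]) hq
  rw [add_sub_cancel, Real.div_rpow hr hs.le, le_div_iff₀ (by positivity)] at bernoulli
  calc s ^ q + q * s ^ (q - 1) * (r - s) = (1 + q * (r / s - 1)) * s ^ q := by
        rw [Real.rpow_sub_one hs.ne']; field_simp
    _ ≤ r ^ q := bernoulli

theorem rpow_mul_add_sq_div_le_of_stationary {c q τ s α : ℝ} (hc : 0 ≤ c) (hq : 1 ≤ q)
    (hτ : 0 < τ) (hs : 0 < s) (hstat : c * q * s ^ (q - 1) = α / τ) {r : ℝ} (hr : 0 ≤ r) :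
    s ^ q * c + α ^ 2 / (2 * τ) ≤ r ^ q * c + (s + α - r) ^ 2 / (2 * τ) := by
  have tangent := mul_le_mul_of_nonneg_left (Real.tangent_line_le_rpow hq hs hr) hc
  have expand : (s + α - r) ^ 2 / (2 * τ)
      = α ^ 2 / (2 * τ) - α / τ * (r - s) + (r - s) ^ 2 / (2 * τ) := by
    field_simp; ring
  have : 0 ≤ (r - s) ^ 2 / (2 * τ) := by positivity
  rw [expand, ← hstat]
  linarith

section ConjExponent

variable {p : ℝ}

theorem one_le_div_sub_one (hp : 1 < p) : 1 ≤ p / (p - 1) := by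
  rw [le_div_iff₀ (by linarith)]; linarith

theorem rpow_conj_const_pos (hp : 1 < p) : 0 < p ^ (-1 / (p - 1)) - p ^ (-p / (p - 1)) := by
  rw [sub_pos]
  exact Real.rpow_lt_rpow_of_exponent_lt hp
    (div_lt_div_of_pos_right (by linarith) (by linarith))

theorem rpow_conj_const_mul (hp : 1 < p) :
    (p ^ (-1 / (p - 1)) - p ^ (-p / (p - 1))) * (p / (p - 1)) = p ^ (-1 / (p - 1)) := by
  have hp0 : 0 < p := by linarith
  have : p ^ (-p / (p - 1)) = p ^ (-1 / (p - 1)) * p⁻¹ := by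
    rw [← Real.rpow_neg_one p, ← Real.rpow_add hp0]
    congr 1
    field_simp [show p - 1 ≠ 0 by linarith]
    ring
  rw [this]
  field_simp [show p - 1 ≠ 0 by linarith]

theorem rpow_conj_first_order_condition (hp : 1 < p) {τ α : ℝ} (hτ : 0 < τ) (hα : 0 < α) :
    (p ^ (-1 / (p - 1)) - p ^ (-p / (p - 1))) * (p / (p - 1))
      * (τ ^ (1 - p) * p * α ^ (p - 1)) ^ (p / (p - 1) - 1) = α / τ := by
  have hp0 : 0 < p := by linarith
  have hp1 : p - 1 ≠ 0 := by linarith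
  have hexp : p / (p - 1) - 1 = 1 / (p - 1) := by field_simp; ring
  rw [rpow_conj_const_mul hp, hexp, Real.mul_rpow (by positivity) (by positivity),
    Real.mul_rpow (by positivity) hp0.le, ← Real.rpow_mul hτ.le, ← Real.rpow_mul hα.le,
    show (1 - p) * (1 / (p - 1)) = -1 by field_simp; ring, mul_one_div_cancel hp1,
    Real.rpow_neg_one, Real.rpow_one]
  have : p ^ (-1 / (p - 1)) * p ^ (1 / (p - 1)) = 1 := by
    rw [← Real.rpow_add hp0, ← add_div, neg_add_cancel, zero_div, Real.rpow_zero]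
  linear_combination (τ⁻¹ * α) * this

end ConjExponent

section Normed

variable {E : Type*} [NormedAddCommGroup E] [NormedSpace ℝ E] {z : E} {a : ℝ}

theorem norm_div_norm_smul (ha : 0 ≤ a) (haz : a ≤ ‖z‖) : ‖(a / ‖z‖) • z‖ = a := by
  rw [norm_smul, Real.norm_of_nonneg (by positivity),
    div_mul_cancel_of_imp fun h => le_antisymm (h ▸ haz) ha]

theorem norm_sub_div_norm_smul (ha : 0 ≤ a) (haz : a ≤ ‖z‖) :
    ‖z - (a / ‖z‖) • z‖ = ‖z‖ - a := by
  have hle : a / ‖z‖ ≤ 1 := div_le_one_of_le₀ haz (norm_nonneg z)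
  rw [show z - (a / ‖z‖) • z = (1 - a / ‖z‖) • z by rw [sub_smul, one_smul], norm_smul,
    Real.norm_of_nonneg (by linarith), sub_mul, one_mul,
    div_mul_cancel_of_imp fun h => le_antisymm (h ▸ haz) ha]

end Normed

theorem prox_cconj_rpow_norm_minimizer_general (m : ℕ) (τ p : ℝ)
    (hτ : 0 < τ) (hp1 : 1 < p)
    (z : EuclideanSpace ℝ (Fin m))
    (α : ℝ) (hα0 : 0 < α)
    (hαeq : α + τ ^ (1 - p) * p * α ^ (p - 1) = ‖z‖) :
    ∀ y : EuclideanSpace ℝ (Fin m),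
      ‖((‖z‖ - α) / ‖z‖) • z‖ ^ (p / (p - 1)) * (p ^ (-1 / (p - 1)) - p ^ (-p / (p - 1)))
          + ‖z - ((‖z‖ - α) / ‖z‖) • z‖ ^ 2 / (2 * τ)
        ≤ ‖y‖ ^ (p / (p - 1)) * (p ^ (-1 / (p - 1)) - p ^ (-p / (p - 1)))
          + ‖z - y‖ ^ 2 / (2 * τ) := by
  intro y
  have hs : ‖z‖ - α = τ ^ (1 - p) * p * α ^ (p - 1) := by linarith
  have hs0 : 0 < ‖z‖ - α := by rw [hs]; positivity
  have hstat := rpow_conj_first_order_condition hp1 hτ hα0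
  rw [← hs] at hstat
  rw [norm_div_norm_smul hs0.le (by linarith), norm_sub_div_norm_smul hs0.le (by linarith),
    sub_sub_cancel]
  have hnorm : (‖z‖ - ‖y‖) ^ 2 ≤ ‖z - y‖ ^ 2 := by
    obtain ⟨hlow, hupp⟩ := abs_le.mp (abs_norm_sub_norm_le z y)
    exact sq_le_sq' hlow hupp
  calc _ ≤ ‖y‖ ^ (p / (p - 1)) * (p ^ (-1 / (p - 1)) - p ^ (-p / (p - 1)))
          + (‖z‖ - α + α - ‖y‖) ^ 2 / (2 * τ) :=
        rpow_mul_add_sq_div_le_of_stationary (rpow_conj_const_pos hp1).le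
          (one_le_div_sub_one hp1) hτ hs0 hstat (norm_nonneg y)
    _ ≤ _ := by rw [sub_add_cancel]; gcongr

/-- For `τ > 0`, `1 < p < 2`, `z ≠ 0`, with
`R_p(y) = |y|^{p/(p−1)} (p^{−1/(p−1)} − p^{−p/(p−1)})` the convex conjugate of
`y ↦ |y|^p`, and `ᾱ` the unique solution in `(0, |z|)` of
`α + τ^{1−p} p α^{p−1} = |z|`, the point `y* = (|z| − ᾱ) · z/|z|` is a minimizer of
`y ↦ R_p(y) + |z − y|²/(2τ)` over `ℝ^m`. -/
theorem prox_cconj_rpow_norm_minimizer (m : ℕ) (hm : 1 ≤ m) (τ p : ℝ)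
    (hτ : 0 < τ) (hp1 : 1 < p) (hp2 : p < 2)
    (z : EuclideanSpace ℝ (Fin m)) (hz : z ≠ 0)
    (α : ℝ) (hα0 : 0 < α) (hαz : α < ‖z‖)
    (hαeq : α + τ ^ (1 - p) * p * α ^ (p - 1) = ‖z‖) :
    ∀ y : EuclideanSpace ℝ (Fin m),
      ‖((‖z‖ - α) / ‖z‖) • z‖ ^ (p / (p - 1)) * (p ^ (-1 / (p - 1)) - p ^ (-p / (p - 1)))
          + ‖z - ((‖z‖ - α) / ‖z‖) • z‖ ^ 2 / (2 * τ)
        ≤ ‖y‖ ^ (p / (p - 1)) * (p ^ (-1 / (p - 1)) - p ^ (-p / (p - 1)))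
          + ‖z - y‖ ^ 2 / (2 * τ) :=
  prox_cconj_rpow_norm_minimizer_general m τ p hτ hp1 z α hα0 hαeq
end

section
/- Let τ > 0, let p be a real number with 1 < p < 2, and let r > 0. Let ᾱ be the unique solution in (0, r) of α + τ p α^{p−1} = r, and let (α_k) be generated by the Newton iteration α_{k+1} = (r + τ p (p − 2) α_k^{p−1}) / (1 + τ p (p − 1) α_k^{p−2}) from a start value α_0 > 0 with α_0^{p−1} < r/(τ p (2 − p)). Then the convergence is quadratic: there exists a constant C > 0 such that for all k ≥ 1, 0 ≤ ᾱ − α_{k+1} ≤ C (ᾱ − α_k)². -/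
open Real

/-- Tangent-line inequality for the concave function `x ↦ x ^ q`, `0 < q < 1`. -/
lemma tangent_concave_rpow {x y q : ℝ} (hx : 0 < x) (hy : 0 < y)
    (hq0 : 0 < q) (hq1 : q < 1) :
    y ^ q ≤ x ^ q + q * x ^ (q - 1) * (y - x) := by
  have ht : (0:ℝ) < y / x := div_pos hy hx
  have hb : (y / x) ^ q ≤ 1 + q * (y / x - 1) := by
    have := rpow_one_add_le_one_add_mul_self (s := y / x - 1)
      (by linarith) hq0.le hq1.le
    simpa using this
  have hxq : (0:ℝ) < x ^ q := Real.rpow_pos_of_pos hx q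
  have hdiv : (y / x) ^ q = y ^ q / x ^ q := Real.div_rpow hy.le hx.le q
  have hxs : x ^ (q - 1) = x ^ q / x := by
    rw [Real.rpow_sub hx, Real.rpow_one]
  rw [hdiv] at hb
  have := (div_le_iff₀ hxq).mp hb
  rw [hxs]
  calc y ^ q ≤ (1 + q * (y / x - 1)) * x ^ q := this
    _ = x ^ q + q * (x ^ q / x) * (y - x) := by
        field_simp
  
/-- Tangent-line inequality for the convex function `x ↦ x ^ q`, `-1 < q < 0`. -/
lemma tangent_convex_rpow {x y q : ℝ} (hx : 0 < x) (hy : 0 < y)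
    (hq0 : -1 < q) (hq1 : q < 0) :
    x ^ q + q * x ^ (q - 1) * (y - x) ≤ y ^ q := by
  have ht : (0:ℝ) < y / x := div_pos hy hx
  -- first show `1 + q * (t - 1) ≤ t ^ q` for `t = y/x`
  have key : ∀ t : ℝ, 0 < t → 1 + q * (t - 1) ≤ t ^ q := by
    intro t ht
    have htq : (0:ℝ) < t ^ q := Real.rpow_pos_of_pos ht q
    rcases le_or_gt (1 + q * (t - 1)) 0 with h | h
    · linarith
    · -- Bernoulli for exponent `-q ∈ (0,1)`
      have hb : t ^ (-q) ≤ 1 + (-q) * (t - 1) := by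
        have := rpow_one_add_le_one_add_mul_self (s := t - 1) (p := -q)
          (by linarith) (by linarith) (by linarith)
        simpa using this
      have htq' : (0:ℝ) < t ^ (-q) := Real.rpow_pos_of_pos ht _
      have hinv : t ^ q = (t ^ (-q))⁻¹ := by
        rw [Real.rpow_neg ht.le, inv_inv]
      have h2 : (1 + q * (t - 1)) * (t ^ (-q)) ≤ 1 := by
        have hsq : (1 + q * (t - 1)) * (1 + (-q) * (t - 1)) ≤ 1 := by
          nlinarith [sq_nonneg (q * (t - 1))]
        nlinarith
      rw [hinv, ← one_div, le_div_iff₀ htq']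
      exact h2
  have hb := key (y / x) ht
  have hxq : (0:ℝ) < x ^ q := Real.rpow_pos_of_pos hx q
  have hdiv : (y / x) ^ q = y ^ q / x ^ q := Real.div_rpow hy.le hx.le q
  rw [hdiv, le_div_iff₀ hxq] at hb
  have hxs : x ^ (q - 1) = x ^ q / x := by
    rw [Real.rpow_sub hx, Real.rpow_one]
  rw [hxs]
  calc x ^ q + q * (x ^ q / x) * (y - x)
      = (1 + q * (y / x - 1)) * x ^ q := by field_simp
    _ ≤ y ^ q := hb

/-- Quadratic convergence of the Newton iteration for
`s(α) = α + τ p α^{p−1} − r`: with a valid start value, there is `C > 0` with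
`0 ≤ ᾱ − α_{k+1} ≤ C (ᾱ − α_k)²` for all `k ≥ 1`. -/
theorem newton_iteration_quadratic (τ p r : ℝ)
    (hτ : 0 < τ) (hp1 : 1 < p) (hp2 : p < 2) (hr : 0 < r)
    (αbar : ℝ) (hαbar0 : 0 < αbar) (hαbarr : αbar < r)
    (hαbareq : αbar + τ * p * αbar ^ (p - 1) = r)
    (α : ℕ → ℝ)
    (hrec : ∀ k : ℕ, α (k + 1)
      = (r + τ * p * (p - 2) * α k ^ (p - 1)) / (1 + τ * p * (p - 1) * α k ^ (p - 2)))
    (h0 : 0 < α 0) (hstart : α 0 ^ (p - 1) < r / (τ * p * (2 - p))) :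
    ∃ C : ℝ, 0 < C ∧ ∀ k : ℕ, 1 ≤ k →
      0 ≤ αbar - α (k + 1) ∧ αbar - α (k + 1) ≤ C * (αbar - α k) ^ 2 := by
  have hp0 : (0:ℝ) < p := by linarith
  have hτp : 0 < τ * p := mul_pos hτ hp0
  -- denominators are positive
  have hD : ∀ a : ℝ, 0 < a → 0 < 1 + τ * p * (p - 1) * a ^ (p - 2) := by
    intro a ha
    have h1 := Real.rpow_pos_of_pos ha (p - 2)
    nlinarith [mul_pos (mul_pos hτp (by linarith : (0:ℝ) < p - 1)) h1]
  -- the key algebraic identity: a^(p-1) = a^(p-2) * a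
  have hpow : ∀ a : ℝ, 0 < a → a ^ (p - 1) = a ^ (p - 2) * a := by
    intro a ha
    rw [show p - 1 = (p - 2) + 1 by ring, Real.rpow_add_one ha.ne']
  -- the Newton step never overshoots `αbar`
  have hNle : ∀ a : ℝ, 0 < a →
      (r + τ * p * (p - 2) * a ^ (p - 1)) / (1 + τ * p * (p - 1) * a ^ (p - 2)) ≤ αbar := by
    intro a ha
    rw [div_le_iff₀ (hD a ha)]
    have htan := tangent_concave_rpow ha hαbar0 (by linarith : (0:ℝ) < p - 1)
      (by linarith : p - 1 < 1)
    rw [show p - 1 - 1 = p - 2 by ring] at htan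
    have hp2a := hpow a ha
    rw [hp2a] at htan ⊢
    nlinarith [mul_le_mul_of_nonneg_left htan hτp.le]
  -- the Newton step increases from below `αbar`
  have hNge : ∀ a : ℝ, 0 < a → a ≤ αbar →
      a ≤ (r + τ * p * (p - 2) * a ^ (p - 1)) / (1 + τ * p * (p - 1) * a ^ (p - 2)) := by
    intro a ha hab
    rw [le_div_iff₀ (hD a ha)]
    have hmono : a ^ (p - 1) ≤ αbar ^ (p - 1) :=
      Real.rpow_le_rpow ha.le hab (by linarith)
    have hp2a := hpow a ha
    rw [hp2a] at hmono ⊢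
    nlinarith [mul_le_mul_of_nonneg_left hmono hτp.le]
  -- α 1 is positive
  have h1pos : 0 < α 1 := by
    rw [hrec 0]
    apply div_pos _ (hD _ h0)
    have h2p : 0 < τ * p * (2 - p) := by nlinarith
    have := (lt_div_iff₀ h2p).mp hstart
    nlinarith
  -- induction: for k ≥ 1, α 1 ≤ α k and 0 < α k and α k ≤ αbar
  have hav : ∀ k : ℕ, 1 ≤ k → 0 < α k ∧ α k ≤ αbar ∧ α 1 ≤ α k := by
    intro k hk
    induction k with
    | zero => omega
    | succ n ih =>
      rcases Nat.eq_zero_or_pos n with rfl | hn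
      · exact ⟨h1pos, by rw [hrec 0]; exact hNle _ h0, le_rfl⟩
      ·
        obtain ⟨hn1, hn2, hn3⟩ := ih hn
        have hstep : α n ≤ α (n + 1) := by rw [hrec n]; exact hNge _ hn1 hn2
        exact ⟨lt_of_lt_of_le hn1 hstep,
          by rw [hrec n]; exact hNle _ hn1, le_trans hn3 hstep⟩
  set δ := α 1 with hδdef
  have hδ : 0 < δ := h1pos
  refine ⟨τ * p * (p - 1) * (2 - p) * δ ^ (p - 3), ?_, ?_⟩
  · have h1 := Real.rpow_pos_of_pos hδ (p - 3)
    have := mul_pos (mul_pos (mul_pos hτp (by linarith : (0:ℝ) < p - 1))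
      (by linarith : (0:ℝ) < 2 - p)) h1
    linarith [this]
  intro k hk
  obtain ⟨ha, hab, haδ⟩ := hav k hk
  set a := α k with hadef
  have hDa := hD a ha
  constructor
  · have := hNle a ha
    rw [hrec k]
    linarith
  · -- quadratic estimate
    set e := αbar - a with hedef
    have he : 0 ≤ e := by simpa [hedef] using sub_nonneg.mpr hab
    -- g := a^(p-1) + (p-1) a^(p-2) e - αbar^(p-1) ≥ 0
    have hg0 : 0 ≤ a ^ (p - 1) + (p - 1) * a ^ (p - 2) * e - αbar ^ (p - 1) := by
      have htan := tangent_concave_rpow ha hαbar0 (by linarith : (0:ℝ) < p - 1)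
        (by linarith : p - 1 < 1)
      rw [show p - 1 - 1 = p - 2 by ring] at htan
      simp only [hedef]
      linarith
    -- identity:  αbar - N a = τp * g / D
    have hiden : αbar - α (k + 1)
        = τ * p * (a ^ (p - 1) + (p - 1) * a ^ (p - 2) * e - αbar ^ (p - 1))
          / (1 + τ * p * (p - 1) * a ^ (p - 2)) := by
      rw [hrec k, eq_div_iff hDa.ne', sub_mul, div_mul_cancel₀ _ hDa.ne']
      have hp2a := hpow a ha
      simp only [hedef]
      linear_combination hαbareq - τ * p * (p - 1) * hp2a
    have hDge1 : (1:ℝ) ≤ 1 + τ * p * (p - 1) * a ^ (p - 2) := by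
      have h1 := Real.rpow_pos_of_pos ha (p - 2)
      have := mul_pos (mul_pos hτp (by linarith : (0:ℝ) < p - 1)) h1
      linarith [this]
    have hstep1 : αbar - α (k + 1)
        ≤ τ * p * (a ^ (p - 1) + (p - 1) * a ^ (p - 2) * e - αbar ^ (p - 1)) := by
      rw [hiden]
      exact div_le_self (mul_nonneg hτp.le hg0) hDge1
    -- bound g ≤ (p-1) e (a^(p-2) - αbar^(p-2))
    have htan2 := tangent_concave_rpow hαbar0 ha (by linarith : (0:ℝ) < p - 1)
      (by linarith : p - 1 < 1)
    rw [show p - 1 - 1 = p - 2 by ring] at htan2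
    -- bound a^(p-2) - αbar^(p-2) ≤ (2-p) a^(p-3) e
    have htan3 := tangent_convex_rpow ha hαbar0 (by linarith : -1 < p - 2)
      (by linarith : p - 2 < 0)
    rw [show p - 2 - 1 = p - 3 by ring] at htan3
    have hmono3 : a ^ (p - 3) ≤ δ ^ (p - 3) :=
      Real.rpow_le_rpow_of_nonpos hδ haδ (by linarith)
    have hg2 : a ^ (p - 1) + (p - 1) * a ^ (p - 2) * e - αbar ^ (p - 1)
        ≤ (p - 1) * (2 - p) * δ ^ (p - 3) * e ^ 2 := by
      have hpe : (0:ℝ) ≤ (p - 1) * e := mul_nonneg (by linarith) he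
      have h1 : a ^ (p - 1) + (p - 1) * a ^ (p - 2) * e - αbar ^ (p - 1)
          ≤ (p - 1) * e * (a ^ (p - 2) - αbar ^ (p - 2)) := by
        simp only [hedef]
        linarith [htan2]
      have h2 : a ^ (p - 2) - αbar ^ (p - 2) ≤ (2 - p) * a ^ (p - 3) * e := by
        simp only [hedef]
        linarith [htan3]
      have h3 : (2 - p) * a ^ (p - 3) * e ≤ (2 - p) * δ ^ (p - 3) * e :=
        mul_le_mul_of_nonneg_right
          (mul_le_mul_of_nonneg_left hmono3 (by linarith)) he
      calc a ^ (p - 1) + (p - 1) * a ^ (p - 2) * e - αbar ^ (p - 1)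
          ≤ (p - 1) * e * (a ^ (p - 2) - αbar ^ (p - 2)) := h1
        _ ≤ (p - 1) * e * ((2 - p) * δ ^ (p - 3) * e) :=
            mul_le_mul_of_nonneg_left (h2.trans h3) hpe
        _ = (p - 1) * (2 - p) * δ ^ (p - 3) * e ^ 2 := by ring
    calc αbar - α (k + 1)
        ≤ τ * p * (a ^ (p - 1) + (p - 1) * a ^ (p - 2) * e - αbar ^ (p - 1)) := hstep1
      _ ≤ τ * p * ((p - 1) * (2 - p) * δ ^ (p - 3) * e ^ 2) := by
          apply mul_le_mul_of_nonneg_left hg2 hτp.le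
      _ = τ * p * (p - 1) * (2 - p) * δ ^ (p - 3) * (αbar - a) ^ 2 := by
          simp only [hedef]; ring
end

section
/- Let Ω ⊆ ℝ^d be a measurable set, let p : Ω → [1,2] be measurable, let τ > 0, and let f ∈ L²(Ω, ℝ^m). Then minimization and integration can be exchanged for the Moreau envelope of the modular: the infimum over g ∈ L²(Ω, ℝ^m) of ∫_Ω |g(x)|^{p(x)} dx + (1/(2τ)) ‖f − g‖_{L²}² equals ∫_Ω [ inf over w ∈ ℝ^m of (|w|^{p(x)} + |f(x) − w|²/(2τ)) ] dx (as an equality in [0,∞]). -/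
open MeasureTheory ENNReal

/-!
The inequality `≥` holds pointwise. For `≤`, fix a dense sequence `(wₙ)` in `ℝ^m`. Since the
integrand is continuous in `w`, its infimum over `w` is its infimum along `(wₙ)`, so taking at
each `x` the first `wₙ` that is within a measurable positive slack `δ x` of the infimum, with
`∫ δ < ε`, gives a measurable `ε`-minimizer `g`. Its cost is finite and dominates
`∫ ‖f − g‖²/(2τ)`, so `g ∈ L²`.
-/

theorem UpperSemicontinuous.iInf_comp_eq_iInf {E β ι : Type*} [TopologicalSpace E]
    [CompleteLinearOrder β] {f : E → β} (hf : UpperSemicontinuous f) {u : ι → E}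
    (hu : DenseRange u) : ⨅ i, f (u i) = ⨅ w, f w := by
  refine le_antisymm (le_iInf fun w => ?_) (le_iInf fun i => iInf_le _ _)
  by_contra! hlt
  obtain ⟨i, hi⟩ := hu.mem_nhds (hf w _ hlt)
  exact (iInf_le (fun i => f (u i)) i).not_gt hi

section Interchange

variable {α E : Type*} [MeasurableSpace α] {μ : Measure α} [SigmaFinite μ]
  [TopologicalSpace E] [TopologicalSpace.SeparableSpace E] [Nonempty E] [MeasurableSpace E]
  {Φ : α → E → ℝ≥0∞}

theorem exists_measurable_lintegral_comp_le_lintegral_iInf_add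
    (hΦ : ∀ w, Measurable fun x => Φ x w) (husc : ∀ᵐ x ∂μ, UpperSemicontinuous (Φ x))
    {ε : ℝ≥0∞} (hε : ε ≠ 0) :
    ∃ g : α → E, Measurable g ∧ ∫⁻ x, Φ x (g x) ∂μ ≤ ∫⁻ x, ⨅ w, Φ x w ∂μ + ε := by
  classical
  obtain ⟨δ, hδ_pos, hδ_meas, hδ_int⟩ := exists_pos_lintegral_lt_of_sigmaFinite μ hε
  set u := TopologicalSpace.denseSeq E
  have hI_meas : Measurable fun x => ⨅ n, Φ x (u n) := .iInf fun n => hΦ (u n)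
  have hnear : ∀ x, ∃ n, Φ x (u n) ≤ (⨅ k, Φ x (u k)) + δ x := by
    intro x
    rcases eq_top_or_lt_top (⨅ k, Φ x (u k)) with htop | hfin
    · exact ⟨0, by simp [htop]⟩
    · obtain ⟨n, hn⟩ := iInf_lt_iff.1 <|
        ENNReal.lt_add_right hfin.ne (ENNReal.coe_ne_zero.2 (hδ_pos x).ne')
      exact ⟨n, hn.le⟩
  refine ⟨fun x => u (Nat.find (hnear x)), Measurable.find (fun _ => measurable_const)
    (fun n => measurableSet_le (hΦ _) (hI_meas.add hδ_meas.coe_nnreal_ennreal)) hnear, ?_⟩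
  calc ∫⁻ x, Φ x (u (Nat.find (hnear x))) ∂μ
      ≤ ∫⁻ x, (⨅ k, Φ x (u k)) + δ x ∂μ := lintegral_mono fun x => Nat.find_spec (hnear x)
    _ = ∫⁻ x, ⨅ k, Φ x (u k) ∂μ + ∫⁻ x, (δ x : ℝ≥0∞) ∂μ := lintegral_add_left hI_meas _
    _ ≤ ∫⁻ x, ⨅ w, Φ x w ∂μ + ε := by
      refine add_le_add (lintegral_mono_ae (husc.mono fun x hx => ?_)) hδ_int.le
      exact (hx.iInf_comp_eq_iInf (TopologicalSpace.denseRange_denseSeq E)).le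

theorem iInf_lintegral_comp_eq_lintegral_iInf {ι : Type*} (G : ι → α → E)
    (hG : ∀ g, Measurable g → ∫⁻ x, Φ x (g x) ∂μ < ∞ → ∃ i, G i =ᵐ[μ] g)
    (hΦ : ∀ w, Measurable fun x => Φ x w) (husc : ∀ᵐ x ∂μ, UpperSemicontinuous (Φ x)) :
    ⨅ i, ∫⁻ x, Φ x (G i x) ∂μ = ∫⁻ x, ⨅ w, Φ x w ∂μ := by
  refine le_antisymm ?_ (le_iInf fun i => lintegral_mono fun x => iInf_le _ _)
  refine ENNReal.le_of_forall_pos_le_add fun ε hε hfin => ?_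
  obtain ⟨g, hg_meas, hg⟩ := exists_measurable_lintegral_comp_le_lintegral_iInf_add hΦ husc
    (ENNReal.coe_ne_zero.2 hε.ne')
  obtain ⟨i, hi⟩ := hG g hg_meas (hg.trans_lt (ENNReal.add_lt_top.2 ⟨hfin, coe_lt_top⟩))
  calc ⨅ i, ∫⁻ x, Φ x (G i x) ∂μ ≤ ∫⁻ x, Φ x (G i x) ∂μ := iInf_le _ i
    _ = ∫⁻ x, Φ x (g x) ∂μ := lintegral_congr_ae (hi.mono fun x hx => congrArg (Φ x) hx)
    _ ≤ _ := hg

end Interchange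

noncomputable def moreauIntegrand {X E : Type*} [NormedAddCommGroup E] (p : X → ℝ) (τ : ℝ)
    (f : X → E) (x : X) (w : E) : ℝ :=
  ‖w‖ ^ p x + ‖f x - w‖ ^ 2 / (2 * τ)

section MoreauIntegrand

variable {X E : Type*} [NormedAddCommGroup E] {p : X → ℝ} {τ : ℝ} {f : X → E}

theorem continuous_moreauIntegrand {x : X} (hpx : 0 ≤ p x) :
    Continuous (moreauIntegrand p τ f x) :=
  (continuous_norm.rpow_const fun _ => Or.inr hpx).add
    (((continuous_const.sub continuous_id).norm.pow 2).div_const _)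

theorem measurable_moreauIntegrand [MeasurableSpace X] [MeasurableSpace E] [OpensMeasurableSpace E]
    (hp : Measurable p) (hf : Measurable f) (w : E) :
    Measurable fun x => moreauIntegrand p τ f x w :=
  (measurable_const.pow hp).add
    ((((continuous_sub_right w).norm.measurable.comp hf).pow_const 2).div_const _)

theorem ofReal_moreauIntegrand (hτ : 0 < τ) (x : X) (w : E) :
    ENNReal.ofReal (moreauIntegrand p τ f x w)
      = ENNReal.ofReal (‖w‖ ^ p x) + ‖f x - w‖ₑ ^ 2 * (ENNReal.ofReal (2 * τ))⁻¹ := by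
  rw [moreauIntegrand, ENNReal.ofReal_add (by positivity) (by positivity),
    ENNReal.ofReal_div_of_pos (by positivity), ENNReal.ofReal_pow (norm_nonneg _), ofReal_norm,
    div_eq_mul_inv]

end MoreauIntegrand

section L2

variable {α E : Type*} [MeasurableSpace α] {μ : Measure α} [NormedAddCommGroup E] {p : α → ℝ}
  {τ : ℝ}

theorem MeasureTheory.Lp.ofReal_norm_sq_eq_lintegral (h : Lp E 2 μ) :
    ENNReal.ofReal (‖h‖ ^ 2) = ∫⁻ x, ‖h x‖ₑ ^ 2 ∂μ := by
  have := eLpNorm_nnreal_pow_eq_lintegral (f := h) (μ := μ) (p := 2) two_ne_zero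
  push_cast at this
  rw [Lp.norm_def, ← ENNReal.toReal_pow, ENNReal.ofReal_toReal (pow_ne_top (Lp.eLpNorm_ne_top h)),
    ← ENNReal.rpow_two, this]
  simp

theorem memLp_two_of_lintegral_enorm_sq_lt_top {h : α → E} (hm : AEStronglyMeasurable h μ)
    (hfin : ∫⁻ x, ‖h x‖ₑ ^ 2 ∂μ < ∞) : MemLp h 2 μ :=
  ⟨hm, (eLpNorm_lt_top_iff_lintegral_rpow_enorm_lt_top two_ne_zero ofNat_ne_top).2
    (by simpa using hfin)⟩

theorem lintegral_ofReal_moreauIntegrand (hp : Measurable p) (hτ : 0 < τ) (f g : Lp E 2 μ) :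
    ∫⁻ x, ENNReal.ofReal (moreauIntegrand p τ f x (g x)) ∂μ
      = ∫⁻ x, ENNReal.ofReal (‖g x‖ ^ p x) ∂μ + ENNReal.ofReal (‖f - g‖ ^ 2 / (2 * τ)) := by
  have hg := Lp.aestronglyMeasurable g
  simp_rw [ofReal_moreauIntegrand hτ]
  rw [lintegral_add_left' (hg.norm.aemeasurable.pow hp.aemeasurable).ennreal_ofReal,
    lintegral_mul_const'' _ (f := fun x => ‖f x - g x‖ₑ ^ 2)
      (((Lp.aestronglyMeasurable f).sub hg).enorm.pow_const 2),
    ENNReal.ofReal_div_of_pos (by positivity), div_eq_mul_inv, Lp.ofReal_norm_sq_eq_lintegral]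
  congr 2
  exact lintegral_congr_ae ((Lp.coeFn_sub f g).mono fun x hx => by simp only [hx, Pi.sub_apply])

theorem memLp_two_of_lintegral_moreauIntegrand_lt_top {f g : α → E} (hf : MemLp f 2 μ)
    (hg : AEStronglyMeasurable g μ) (hτ : 0 < τ)
    (hfin : ∫⁻ x, ENNReal.ofReal (moreauIntegrand p τ f x (g x)) ∂μ < ∞) : MemLp g 2 μ := by
  have hdist : ∀ x, ‖f x - g x‖ₑ ^ 2
      ≤ ENNReal.ofReal (2 * τ) * ENNReal.ofReal (moreauIntegrand p τ f x (g x)) := by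
    intro x
    rw [← ofReal_norm, ← ENNReal.ofReal_pow (norm_nonneg _),
      ← ENNReal.ofReal_mul (by positivity)]
    refine ENNReal.ofReal_le_ofReal ?_
    rw [moreauIntegrand, mul_add, mul_div_cancel₀ _ (by positivity)]
    exact le_add_of_nonneg_left (by positivity)
  have hsub : MemLp (f - g) 2 μ := by
    refine memLp_two_of_lintegral_enorm_sq_lt_top (hf.1.sub hg) ?_
    calc ∫⁻ x, ‖(f - g) x‖ₑ ^ 2 ∂μ
        ≤ ∫⁻ x, ENNReal.ofReal (2 * τ) * ENNReal.ofReal (moreauIntegrand p τ f x (g x)) ∂μ :=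
          lintegral_mono hdist
      _ < ∞ := by
          rw [lintegral_const_mul' _ _ ofReal_ne_top]
          exact ENNReal.mul_lt_top ofReal_lt_top hfin
  simpa using hf.sub hsub

end L2

theorem moreau_envelope_modular_pointwise_general (d m : ℕ)
    (Ω : Set (EuclideanSpace ℝ (Fin d))) (hΩ : MeasurableSet Ω)
    (p : EuclideanSpace ℝ (Fin d) → ℝ) (hp : Measurable p)
    (hp1 : ∀ x ∈ Ω, 1 ≤ p x)
    (τ : ℝ) (hτ : 0 < τ)
    (f : Lp (EuclideanSpace ℝ (Fin m)) 2 (volume.restrict Ω)) :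
    (⨅ g : Lp (EuclideanSpace ℝ (Fin m)) 2 (volume.restrict Ω),
        (∫⁻ x in Ω, ENNReal.ofReal (‖g x‖ ^ p x))
          + ENNReal.ofReal (‖f - g‖ ^ 2 / (2 * τ)))
      = ∫⁻ x in Ω, ENNReal.ofReal
          (⨅ w : EuclideanSpace ℝ (Fin m), (‖w‖ ^ p x + ‖f x - w‖ ^ 2 / (2 * τ))) := by
  -- the integrand must be measurable in `x` for every `w`, so `f` is replaced by a
  -- measurable representative
  obtain ⟨f', hf'_meas, hff'⟩ := Lp.aestronglyMeasurable f
  have hf' : MemLp f' 2 (volume.restrict Ω) := (Lp.memLp f).ae_eq hff'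
  have husc : ∀ᵐ x ∂volume.restrict Ω,
      UpperSemicontinuous fun w => ENNReal.ofReal (moreauIntegrand p τ f' x w) :=
    (ae_restrict_mem hΩ).mono fun x hx => (ENNReal.continuous_ofReal.comp
      (continuous_moreauIntegrand (zero_le_one.trans (hp1 x hx)))).upperSemicontinuous
  calc _ = ⨅ g : Lp (EuclideanSpace ℝ (Fin m)) 2 (volume.restrict Ω),
        ∫⁻ x in Ω, ENNReal.ofReal (moreauIntegrand p τ f' x (g x)) := by
        refine iInf_congr fun g => ?_
        rw [← lintegral_ofReal_moreauIntegrand hp hτ]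
        exact lintegral_congr_ae (hff'.mono fun x hx => by simp only [moreauIntegrand, hx])
    _ = ∫⁻ x in Ω, ⨅ w, ENNReal.ofReal (moreauIntegrand p τ f' x w) :=
        iInf_lintegral_comp_eq_lintegral_iInf (fun g : Lp _ 2 (volume.restrict Ω) => ⇑g)
          (fun g hg hfin => ⟨(memLp_two_of_lintegral_moreauIntegrand_lt_top hf'
            hg.aestronglyMeasurable hτ hfin).toLp g, MemLp.coeFn_toLp _⟩)
          (fun w => (measurable_moreauIntegrand hp hf'_meas.measurable w).ennreal_ofReal) husc
    _ = _ := lintegral_congr_ae (hff'.mono fun x hx => by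
        simp only [moreauIntegrand, hx, ENNReal.ofReal_iInf])

/-- Exchange of minimization and integration for the Moreau envelope of the
variable-exponent modular: for `f ∈ L²(Ω, ℝ^m)` and `τ > 0`,
`inf_{g ∈ L²} (∫_Ω |g(x)|^{p(x)} dx + ‖f − g‖²/(2τ))
  = ∫_Ω inf_{w ∈ ℝ^m} (|w|^{p(x)} + |f(x) − w|²/(2τ)) dx` in `[0,∞]`. -/
theorem moreau_envelope_modular_pointwise (d m : ℕ) (hm : 1 ≤ m)
    (Ω : Set (EuclideanSpace ℝ (Fin d))) (hΩ : MeasurableSet Ω)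
    (p : EuclideanSpace ℝ (Fin d) → ℝ) (hp : Measurable p)
    (hp1 : ∀ x ∈ Ω, 1 ≤ p x) (hp2 : ∀ x ∈ Ω, p x ≤ 2)
    (τ : ℝ) (hτ : 0 < τ)
    (f : Lp (EuclideanSpace ℝ (Fin m)) 2 (volume.restrict Ω)) :
    (⨅ g : Lp (EuclideanSpace ℝ (Fin m)) 2 (volume.restrict Ω),
        (∫⁻ x in Ω, ENNReal.ofReal (‖g x‖ ^ p x))
          + ENNReal.ofReal (‖f - g‖ ^ 2 / (2 * τ)))
      = ∫⁻ x in Ω, ENNReal.ofReal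
          (⨅ w : EuclideanSpace ℝ (Fin m), (‖w‖ ^ p x + ‖f x - w‖ ^ 2 / (2 * τ))) :=
  moreau_envelope_modular_pointwise_general d m Ω hΩ p hp hp1 τ hτ f
end
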